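/- The number of inversion sequences of length n ≥ 1 such that e_1 ≤ e_2 ≤ ... ≤ e_{n-1} (with e_n arbitrary) equals the central binomial coefficient C(2n-2, n-1). -/

import Mathlib

def MonoInv (m k : ℕ) : Set (Fin m → ℕ) :=
  {e | Monotone e ∧ (∀ i, e i ≤ i.1) ∧ (∀ i, e i ≤ k)}

instance MonoInv.finite (m k : ℕ) : Finite (MonoInv m k) := by
  apply Finite.of_injective
    (f := fun (e : MonoInv m k) (i : Fin m) => (⟨e.1 i, Nat.lt_succ_of_le (e.2.2.2 i)⟩ : Fin (k+1)))
  intro a b hab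
  ext i
  exact congrArg Fin.val (congrFun hab i)

lemma monoInv_card_zero (k : ℕ) : Nat.card (MonoInv 0 k) = 1 := by
  have : Nonempty (MonoInv 0 k) := ⟨⟨fun _ => 0,
    fun a b _ => le_refl 0, fun i => i.elim0, fun i => i.elim0⟩⟩
  have : Subsingleton (MonoInv 0 k) := ⟨by
    rintro ⟨a, _⟩ ⟨b, _⟩
    ext i; exact i.elim0⟩
  exact Nat.card_unique

lemma monoInv_card_k_zero (m : ℕ) : Nat.card (MonoInv m 0) = 1 := by
  have : Nonempty (MonoInv m 0) := ⟨⟨fun _ => 0,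
    fun a b _ => le_refl 0, fun _ => Nat.zero_le _, fun _ => le_refl 0⟩⟩
  have : Subsingleton (MonoInv m 0) := ⟨by
    rintro ⟨a, _, _, ha⟩ ⟨b, _, _, hb⟩
    refine Subtype.ext (funext fun i => ?_)
    show a i = b i
    have := ha i; have := hb i; omega⟩
  exact Nat.card_unique

lemma monoInv_stab (m k : ℕ) (h : m ≤ k + 1) : MonoInv m (k+1) = MonoInv m k := by
  ext e
  constructor
  · rintro ⟨h1, h2, h3⟩
    refine ⟨h1, h2, fun i => le_trans (h2 i) ?_⟩
    have := i.isLt; omega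
  · rintro ⟨h1, h2, h3⟩
    exact ⟨h1, h2, fun i => le_trans (h3 i) (by omega)⟩

/-- Decomposition by the last entry. -/
def monoInvEquiv (m k : ℕ) (h : k + 1 ≤ m) :
    MonoInv (m+1) (k+1) ≃ (MonoInv (m+1) k) ⊕ (MonoInv m (k+1)) where
  toFun e :=
    if hle : e.1 (Fin.last m) ≤ k then
      Sum.inl ⟨e.1, e.2.1, e.2.2.1, fun i => le_trans (e.2.1 (Fin.le_last i)) hle⟩
    else
      Sum.inr ⟨fun i => e.1 i.castSucc,
        fun a b hab => e.2.1 (by simpa using hab),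
        fun i => by simpa using e.2.2.1 i.castSucc,
        fun i => e.2.2.2 i.castSucc⟩
  invFun s :=
    match s with
    | .inl e => ⟨e.1, e.2.1, e.2.2.1, fun i => le_trans (e.2.2.2 i) (Nat.le_succ k)⟩
    | .inr f => ⟨(Fin.snoc f.1 (k+1) : Fin (m+1) → ℕ), by
        have hb : ∀ j : Fin (m+1), (Fin.snoc f.1 (k+1) : Fin (m+1) → ℕ) j ≤ k + 1 := by
          intro j
          refine Fin.lastCases ?_ ?_ j
          · rw [Fin.snoc_last]
          · intro i; rw [Fin.snoc_castSucc]; exact f.2.2.2 i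
        refine ⟨?_, ?_, hb⟩
        · intro a b hab
          revert hab
          refine Fin.lastCases ?_ ?_ b
          · intro _; rw [Fin.snoc_last]; exact hb a
          · intro i hab
            have ham : a.1 < m := lt_of_le_of_lt hab i.isLt
            have ha : a = Fin.castSucc ⟨a.1, ham⟩ := Fin.ext rfl
            rw [ha, Fin.snoc_castSucc, Fin.snoc_castSucc]
            exact f.2.1 (show (⟨a.1, ham⟩ : Fin m) ≤ i from hab)
        · intro j
          refine Fin.lastCases ?_ ?_ j
          · rw [Fin.snoc_last]; simpa using h
          · intro i; rw [Fin.snoc_castSucc]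
            simpa using f.2.2.1 i⟩
  left_inv := by
    rintro ⟨e, he⟩
    by_cases hle : e (Fin.last m) ≤ k
    · simp only [dif_pos hle]
    · simp only [dif_neg hle]
      refine Subtype.ext (funext fun j => ?_)
      refine Fin.lastCases ?_ ?_ j
      · show (Fin.snoc (fun i => e i.castSucc) (k+1) : Fin (m+1) → ℕ) (Fin.last m)
            = e (Fin.last m)
        rw [Fin.snoc_last]
        have := he.2.2 (Fin.last m); omega
      · intro i
        show (Fin.snoc (fun i => e i.castSucc) (k+1) : Fin (m+1) → ℕ) i.castSucc = e i.castSucc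
        rw [Fin.snoc_castSucc]
  right_inv := by
    rintro (⟨e, he⟩ | ⟨f, hf⟩)
    · simp only [dif_pos (he.2.2 (Fin.last m))]
    · have hc : ¬ ((Fin.snoc f (k+1) : Fin (m+1) → ℕ) (Fin.last m) ≤ k) := by
        rw [Fin.snoc_last]; omega
      simp only [dif_neg hc]
      exact congrArg Sum.inr (Subtype.ext (funext fun i =>
        Fin.snoc_castSucc (α := fun _ : Fin (m+1) => ℕ) (k+1) f i))

lemma monoInv_rec (m k : ℕ) (h : k + 1 ≤ m) :
    Nat.card (MonoInv (m+1) (k+1)) =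
      Nat.card (MonoInv (m+1) k) + Nat.card (MonoInv m (k+1)) := by
  rw [Nat.card_congr (monoInvEquiv m k h), Nat.card_sum]


lemma monoInv_card (m : ℕ) : ∀ k, k ≤ m →
    Nat.card (MonoInv m k) + (m+k).choose (m+1) = (m+k).choose m := by
  have pascal : ∀ a b : ℕ, (a+1).choose (b+1) = a.choose b + a.choose (b+1) :=
    fun a b => Nat.choose_succ_succ a b
  induction m with
  | zero =>
    intro k hk
    interval_cases k
    rw [monoInv_card_zero]; simp
  | succ m ih =>
    intro k
    induction k with
    | zero =>
      intro _
      have h0 := monoInv_card_k_zero (m+1)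
      simp [h0, Nat.choose_succ_self, Nat.choose_self]
    | succ k ihk =>
      intro hk
      by_cases hkm : k + 1 ≤ m
      · have h1 := ihk (by omega)
        have h2 := ih (k+1) hkm
        have hr := monoInv_rec m k hkm
        rw [show m+1+k = m+k+1 from by omega] at h1
        rw [show m+(k+1) = m+k+1 from by omega] at h2
        rw [hr, show m+1+(k+1) = (m+k+1)+1 from by omega,
          pascal (m+k+1) (m+1), pascal (m+k+1) m]
        omega
      · have hk' : k = m := by omega
        subst hk'
        have hst : MonoInv (k+1) (k+1) = MonoInv (k+1) k := monoInv_stab (k+1) k (by omega)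
        have h1 := ihk (by omega)
        rw [show k+1+k = k+k+1 from by omega] at h1
        have hs := Nat.choose_symm (show k+1 ≤ k+k+1 from by omega)
        rw [show k+k+1-(k+1) = k from by omega] at hs
        rw [hst, show k+1+(k+1) = (k+k+1)+1 from by omega,
          pascal (k+k+1) (k+1), pascal (k+k+1) k]
        omega


/-- An inversion sequence of length `n`: `e i < i + 1` (0-indexed). -/
def InvSeq (n : ℕ) : Type := ∀ i : Fin n, Fin (i.1 + 1)

def finalEquiv (m : ℕ) :
    {e : InvSeq (m+1) // ∀ i j : Fin (m+1), i < j → j.1 < (m+1) - 1 →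
      (e i : ℕ) ≤ (e j : ℕ)} ≃ (MonoInv m m) × Fin (m+1) where
  toFun e :=
    (⟨fun i : Fin m => (e.1 (i.castLE (Nat.le_succ m)) : ℕ), by
      refine ⟨?_, ?_, ?_⟩
      · intro a b hab
        rcases eq_or_lt_of_le hab with h | h
        · rw [h]
        · exact e.2 (a.castLE (Nat.le_succ m)) (b.castLE (Nat.le_succ m))
            (Fin.lt_def.mpr (by simp only [Fin.coe_castLE]; exact Fin.lt_def.mp h))
            (by have := b.isLt; simp only [Fin.coe_castLE]; omega)
      · intro i
        show (e.1 (i.castLE (Nat.le_succ m)) : ℕ) ≤ i.1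
        have h1 := (e.1 (i.castLE (Nat.le_succ m))).isLt
        simp only [Fin.coe_castLE] at h1
        omega
      · intro i
        show (e.1 (i.castLE (Nat.le_succ m)) : ℕ) ≤ m
        have h1 := (e.1 (i.castLE (Nat.le_succ m))).isLt
        have h2 := i.isLt
        simp only [Fin.coe_castLE] at h1
        omega⟩,
     ⟨(e.1 (Fin.last m) : ℕ), by
        have := (e.1 (Fin.last m)).isLt
        simpa using this⟩)
  invFun p :=
    ⟨fun i => if h : i.1 < m then
        ⟨p.1.1 ⟨i.1, h⟩, Nat.lt_succ_of_le (p.1.2.2.1 ⟨i.1, h⟩)⟩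
      else
        ⟨p.2.1, by have h1 := i.isLt; have h2 := p.2.isLt; omega⟩, by
      intro i j hij hj
      have hj' : j.1 < m := by omega
      have hi' : i.1 < m := by
        have := Fin.lt_def.mp hij
        omega
      simp only [dif_pos hi', dif_pos hj']
      show p.1.1 ⟨i.1, hi'⟩ ≤ p.1.1 ⟨j.1, hj'⟩
      exact p.1.2.1 (show (⟨i.1, hi'⟩ : Fin m) ≤ ⟨j.1, hj'⟩ from
        le_of_lt (Fin.lt_def.mp hij))⟩
  left_inv := by
    rintro ⟨e, he⟩
    refine Subtype.ext (funext fun i => ?_)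
    by_cases h : i.1 < m
    · simp only [dif_pos h]
      apply Fin.ext
      show (e (Fin.castLE (Nat.le_succ m) ⟨i.1, h⟩) : ℕ) = (e i : ℕ)
      rw [show Fin.castLE (Nat.le_succ m) ⟨i.1, h⟩ = i from Fin.ext rfl]
    · have hi : i = Fin.last m := Fin.ext (by
        have := i.isLt
        simp only [Fin.val_last]
        omega)
      subst hi
      simp only [dif_neg h]
  right_inv := by
    intro p
    refine Prod.ext ?_ ?_
    · refine Subtype.ext (funext fun j => ?_)
      show ((if h : (Fin.castLE (Nat.le_succ m) j).1 < m then _ else _ : Fin _) : ℕ) = p.1.1 j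
      rw [dif_pos (show (Fin.castLE (Nat.le_succ m) j).1 < m from j.isLt)]
      rfl
    · apply Fin.ext
      show ((if h : (Fin.last m).1 < m then _ else _ : Fin _) : ℕ) = (p.2 : ℕ)
      rw [dif_neg (show ¬ (Fin.last m).1 < m by simp)]

/-- The number of inversion sequences of length `n ≥ 1` whose first `n - 1` entries are
weakly increasing (the last entry arbitrary) is the central binomial coefficient
`C(2n-2, n-1)`. -/
theorem stmt18 (n : ℕ) (hn : 1 ≤ n) :
    Nat.card {e : InvSeq n // ∀ i j : Fin n, i < j → j.1 < n - 1 →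
      (e i : ℕ) ≤ (e j : ℕ)} =
    (2 * n - 2).choose (n - 1) := by
  obtain ⟨m, rfl⟩ : ∃ m, n = m + 1 := ⟨n - 1, by omega⟩
  rw [Nat.card_congr (finalEquiv m), Nat.card_prod]
  have hfin : Nat.card (Fin (m+1)) = m + 1 := by simp
  rw [hfin]
  have hmc := monoInv_card m m le_rfl
  have hcsr := Nat.choose_succ_right_eq (m+m) m
  rw [show m+m-m = m from by omega] at hcsr
  have h3 : Nat.card (MonoInv m m) * (m+1) + (m+m).choose (m+1) * (m+1)
      = (m+m).choose m * (m+1) := by rw [← add_mul, hmc]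
  rw [hcsr] at h3
  have h5 : (m+m).choose m * (m+1) = (m+m).choose m * m + (m+m).choose m :=
    Nat.mul_succ _ _
  rw [show 2*(m+1)-2 = m+m from by omega, show m+1-1 = m from rfl]
  linarith [h3, h5]
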